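/- arXiv:1510.04663 — 3 statements merged into one kernel-verified Lean document; each statement's English description precedes it below -/
import Mathlib

section
/- Let (γ_n) be a sequence of sub-probability measures on ℝᵈ that totally disintegrates, i.e., for every r > 0, sup_{x ∈ ℝᵈ} γ_n(B_r(x)) → 0 as n → ∞. Then for any sequence (η_n) of sub-probability measures on ℝᵈ, any k ≥ 1, and any continuous function f : (ℝ^{2d})^k → ℝ that is bounded and vanishes as the diameter of its argument points tends to infinity, one has ∫ f(x₁,y₁,…,x_k,y_k) Π_i γ_n(dx_i) Π_i η_n(dy_i) → 0. -/
/-!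
Fix a coordinate `i`. Where `dist (x i) (y i) ≥ R` the integrand is at most `ε`; the remaining set
has `γᵏ ⊗ ηᵏ`-mass at most `⨆ z, γ (ball z R)`, since by Tonelli it is an `ηᵏ`-average of
`γ`-masses of balls `ball (y i) R`. Total disintegration sends this mass to `0`.
-/

open MeasureTheory Filter Set Metric

namespace MeasureTheory

variable {ι : Type*} [Fintype ι] {α : ι → Type*} [∀ i, MeasurableSpace (α i)]
  {m : ∀ i, Measure (α i)} [∀ i, SigmaFinite (m i)]

theorem Measure.pi_univ_le_one (hm : ∀ i, m i univ ≤ 1) : Measure.pi m univ ≤ 1 := by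
  rw [Measure.pi_univ]
  exact Finset.prod_le_one' fun i _ => hm i

theorem Measure.pi_eval_preimage_le (hm : ∀ i, m i univ ≤ 1) (i : ι) {s : Set (α i)}
    (hs : MeasurableSet s) : Measure.pi m (Function.eval i ⁻¹' s) ≤ m i s := by
  classical
  rw [← Measure.map_apply (measurable_pi_apply i) hs, Measure.pi_map_eval, Measure.smul_apply,
    smul_eq_mul]
  exact mul_le_of_le_one_left' (Finset.prod_le_one' fun j _ => hm j)

/-- No measurability of `f` is needed: both norm bounds also hold for the junk value `0`. -/
theorem norm_integral_integral_le_integral_prod {X Y E : Type*} [MeasurableSpace X]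
    [MeasurableSpace Y] [NormedAddCommGroup E] [NormedSpace ℝ E] {μ : Measure X} {ν : Measure Y}
    [SFinite μ] [SFinite ν] {f : X → Y → E} {g : X × Y → ℝ} (hg : Integrable g (μ.prod ν))
    (hfg : ∀ x y, ‖f x y‖ ≤ g (x, y)) :
    ‖∫ x, ∫ y, f x y ∂ν ∂μ‖ ≤ ∫ p, g p ∂(μ.prod ν) := by
  rw [integral_prod g hg]
  refine norm_integral_le_of_norm_le hg.integral_prod_left ?_
  filter_upwards [hg.prod_right_ae] with x hx
  exact norm_integral_le_of_norm_le hx (Eventually.of_forall (hfg x))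

end MeasureTheory

section ConcentrationBound

variable {ι α : Type*} [Fintype ι] [PseudoMetricSpace α] [SecondCountableTopology α]
  [MeasurableSpace α] [OpensMeasurableSpace α] {γ η : Measure α}

theorem measure_pi_prod_pi_setOf_dist_lt_le (hγ : γ univ ≤ 1) (hη : η univ ≤ 1) (i : ι) (R : ℝ) :
    ((Measure.pi fun _ : ι => γ).prod (Measure.pi fun _ : ι => η))
      {p | dist (p.1 i) (p.2 i) < R} ≤ ⨆ z, γ (ball z R) := by
  have : IsFiniteMeasure γ := ⟨hγ.trans_lt ENNReal.one_lt_top⟩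
  have : IsFiniteMeasure η := ⟨hη.trans_lt ENNReal.one_lt_top⟩
  have hS : MeasurableSet {p : (ι → α) × (ι → α) | dist (p.1 i) (p.2 i) < R} :=
    measurableSet_lt (by fun_prop) measurable_const
  rw [Measure.prod_apply_symm hS]
  calc ∫⁻ y, Measure.pi (fun _ => γ) (Function.eval i ⁻¹' ball (y i) R) ∂Measure.pi (fun _ => η)
      ≤ ∫⁻ _, ⨆ z, γ (ball z R) ∂Measure.pi (fun _ => η) := lintegral_mono fun y =>
        (Measure.pi_eval_preimage_le (fun _ => hγ) i measurableSet_ball).trans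
          (le_iSup (fun z => γ (ball z R)) (y i))
    _ ≤ ⨆ z, γ (ball z R) := by
        rw [lintegral_const]
        exact mul_le_of_le_one_right' (Measure.pi_univ_le_one fun _ => hη)

theorem norm_integral_pi_pi_le (hγ : γ univ ≤ 1) (hη : η univ ≤ 1)
    {f : (ι → α) → (ι → α) → ℝ} {C ε R : ℝ} (hC0 : 0 ≤ C) (hC : ∀ x y, |f x y| ≤ C) (hε : 0 ≤ ε)
    (i : ι) (hfar : ∀ x y, R ≤ dist (x i) (y i) → |f x y| ≤ ε) :
    ‖∫ x, ∫ y, f x y ∂Measure.pi (fun _ => η) ∂Measure.pi (fun _ => γ)‖ ≤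
      ε + C * (⨆ z, γ (ball z R)).toReal := by
  have : IsFiniteMeasure γ := ⟨hγ.trans_lt ENNReal.one_lt_top⟩
  have : IsFiniteMeasure η := ⟨hη.trans_lt ENNReal.one_lt_top⟩
  set P := (Measure.pi fun _ : ι => γ).prod (Measure.pi fun _ : ι => η)
  set S := {p : (ι → α) × (ι → α) | dist (p.1 i) (p.2 i) < R}
  have hS : MeasurableSet S := measurableSet_lt (by fun_prop) measurable_const
  have hP : P univ ≤ 1 := by
    rw [← univ_prod_univ, Measure.prod_prod]
    exact mul_le_one' (Measure.pi_univ_le_one fun _ => hγ) (Measure.pi_univ_le_one fun _ => hη)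
  have hsup : ⨆ z, γ (ball z R) ≠ ⊤ :=
    ne_top_of_le_ne_top (measure_ne_top γ univ) (iSup_le fun z => measure_mono (subset_univ _))
  have hbound : ∀ x y, ‖f x y‖ ≤ ε + S.indicator (fun _ => C) (x, y) := by
    intro x y
    rw [Real.norm_eq_abs]
    by_cases hxy : (x, y) ∈ S
    · rw [indicator_of_mem hxy]
      linarith [hC x y]
    · rw [indicator_of_notMem hxy, add_zero]
      exact hfar x y (not_lt.1 hxy)
  calc _ ≤ ∫ p, (ε + S.indicator (fun _ => C) p) ∂P :=
        norm_integral_integral_le_integral_prod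
          ((integrable_const ε).add ((integrable_const C).indicator hS)) hbound
    _ = ε * P.real univ + C * P.real S := by
        rw [integral_add (integrable_const ε) ((integrable_const C).indicator hS),
          integral_const, integral_indicator_const C hS, smul_eq_mul, smul_eq_mul, mul_comm ε,
          mul_comm C]
    _ ≤ ε * 1 + C * (⨆ z, γ (ball z R)).toReal := by
        gcongr
        · exact ENNReal.toReal_le_of_le_ofReal zero_le_one (by simpa using hP)
        · exact ENNReal.toReal_mono hsup (measure_pi_prod_pi_setOf_dist_lt_le hγ hη i R)
    _ = ε + C * (⨆ z, γ (ball z R)).toReal := by rw [mul_one]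

end ConcentrationBound

theorem totally_disintegrating_integral_tendsto_zero_general (d k : ℕ) (hk : 1 ≤ k)
    (γ η : ℕ → Measure (EuclideanSpace ℝ (Fin d)))
    (hγ1 : ∀ n, γ n Set.univ ≤ 1) (hη1 : ∀ n, η n Set.univ ≤ 1)
    (hdis : ∀ r : ℝ, 0 < r →
      Tendsto (fun n => ⨆ x : EuclideanSpace ℝ (Fin d), γ n (Metric.ball x r))
        atTop (nhds 0))
    (f : (Fin k → EuclideanSpace ℝ (Fin d)) → (Fin k → EuclideanSpace ℝ (Fin d)) → ℝ)
    (hfb : ∃ C, ∀ x y, |f x y| ≤ C)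
    (hvanish : ∀ ε > (0 : ℝ), ∃ R : ℝ, ∀ x y,
      (∃ i j, R ≤ dist (x i) (y j) ∨ R ≤ dist (x i) (x j) ∨ R ≤ dist (y i) (y j)) →
      |f x y| ≤ ε) :
    Tendsto (fun n => ∫ x, ∫ y, f x y
        ∂(Measure.pi fun _ : Fin k => η n) ∂(Measure.pi fun _ : Fin k => γ n))
      atTop (nhds 0) := by
  obtain ⟨C, hC⟩ := hfb
  rw [NormedAddGroup.tendsto_nhds_zero]
  intro ε hε
  obtain ⟨R, hR⟩ := hvanish (ε / 2) (half_pos hε)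
  let i : Fin k := ⟨0, hk⟩
  have hfar (x y : Fin k → EuclideanSpace ℝ (Fin d)) (hxy : max R 1 ≤ dist (x i) (y i)) :
      |f x y| ≤ ε / 2 :=
    hR x y ⟨i, i, .inl ((le_max_left R 1).trans hxy)⟩
  have hbound : Tendsto (fun n => ε / 2 + max C 0 * (⨆ z, γ n (ball z (max R 1))).toReal)
      atTop (nhds (ε / 2)) := by
    simpa using tendsto_const_nhds.add (((ENNReal.tendsto_toReal ENNReal.zero_ne_top).comp
      (hdis _ (lt_max_of_lt_right one_pos))).const_mul (max C 0))
  filter_upwards [hbound.eventually_lt_const (half_lt_self hε)] with n hn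
  exact (norm_integral_pi_pi_le (hγ1 n) (hη1 n) (le_max_right C 0)
    (fun x y => (hC x y).trans (le_max_left C 0)) (half_pos hε).le i hfar).trans_lt hn

/-- If `(γ_n)` totally disintegrates (its concentration function tends to `0`), then
integrals of functions vanishing at infinity against `Π γ_n ⊗ Π η_n` tend to `0`. -/
theorem totally_disintegrating_integral_tendsto_zero (d k : ℕ) (hk : 1 ≤ k)
    (γ η : ℕ → Measure (EuclideanSpace ℝ (Fin d)))
    (hγ1 : ∀ n, γ n Set.univ ≤ 1) (hη1 : ∀ n, η n Set.univ ≤ 1)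
    (hdis : ∀ r : ℝ, 0 < r →
      Tendsto (fun n => ⨆ x : EuclideanSpace ℝ (Fin d), γ n (Metric.ball x r))
        atTop (nhds 0))
    (f : (Fin k → EuclideanSpace ℝ (Fin d)) → (Fin k → EuclideanSpace ℝ (Fin d)) → ℝ)
    (hfc : Continuous (Function.uncurry f))
    (hfb : ∃ C, ∀ x y, |f x y| ≤ C)
    (hvanish : ∀ ε > (0 : ℝ), ∃ R : ℝ, ∀ x y,
      (∃ i j, R ≤ dist (x i) (y j) ∨ R ≤ dist (x i) (x j) ∨ R ≤ dist (y i) (y j)) →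
      |f x y| ≤ ε) :
    Tendsto (fun n => ∫ x, ∫ y, f x y
        ∂(Measure.pi fun _ : Fin k => η n) ∂(Measure.pi fun _ : Fin k => γ n))
      atTop (nhds 0) :=
  totally_disintegrating_integral_tendsto_zero_general d k hk γ η hγ1 hη1 hdis f hfb hvanish
end

section
/- Let α_n, β_n be sub-probability measures on ℝᵈ, and let a_n, b_n ∈ ℝᵈ with |a_n − b_n| → ∞. Suppose the shifted measures α_n ⋆ δ_{a_n} and β_n ⋆ δ_{b_n} converge weakly to limits α, β (sub-probability measures). Then for every continuous function V : ℝᵈ → ℝ vanishing at infinity, ∬ V(x − y) α_n(dx) β_n(dy) → 0. -/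
open MeasureTheory Filter

open scoped ENNReal BoundedContinuousFunction ZeroAtInfty

/-!
Both shifted sequences converge weakly to finite limits, hence are tight (portmanteau: the
limsup of the mass of `{r ≤ ‖x‖}` is at most that of the limit). So up to mass `ε`, `αₙ` lives
in the ball of radius `r` around `-aₙ` and `βₙ` in the one around `-bₙ`. For such `x, y`,
`‖x - y‖ ≥ ‖aₙ - bₙ‖ - 2r → ∞`, where `|V| ≤ ε`; on the rest `V` is bounded and the mass
is at most `2ε`.
-/

section Tightness

variable {E : Type*} [NormedAddCommGroup E] [MeasurableSpace E]

lemma IsTightMeasureSet.exists_forall_measure_norm_gt_le {S : Set (Measure E)}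
    (hS : IsTightMeasureSet S) {ε : ℝ≥0∞} (hε : 0 < ε) :
    ∃ r : ℝ, ∀ μ ∈ S, μ {x | r < ‖x‖} ≤ ε := by
  obtain ⟨r, hr⟩ :=
    (ENNReal.tendsto_nhds_zero.1 (tendsto_measure_norm_gt_of_isTightMeasureSet hS) ε hε).exists
  exact ⟨r, fun μ hμ => (le_iSup₂ (f := fun μ (_ : μ ∈ S) => μ {x | r < ‖x‖}) μ hμ).trans hr⟩

variable [BorelSpace E] [ProperSpace E]

lemma isTightMeasureSet_range_of_forall_integral_tendsto {μs : ℕ → Measure E}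
    [∀ n, IsFiniteMeasure (μs n)] {μ : Measure E} [IsFiniteMeasure μ]
    (h : ∀ g : E →ᵇ ℝ, Tendsto (fun n => ∫ x, g x ∂μs n) atTop (nhds (∫ x, g x ∂μ))) :
    IsTightMeasureSet (Set.range μs) := by
  have hconv : Tendsto (β := FiniteMeasure E) (fun n => (⟨μs n, inferInstance⟩ : FiniteMeasure E)) atTop
      (nhds (⟨μ, inferInstance⟩ : FiniteMeasure E)) :=
    FiniteMeasure.tendsto_iff_forall_integral_tendsto.2 h
  have hμ : Tendsto (fun r : ℝ => μ {x | r < ‖x‖}) atTop (nhds 0) := by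
    simpa using tendsto_measure_norm_gt_of_isTightMeasureSet (isTightMeasureSet_singleton (μ := μ))
  refine isTightMeasureSet_range_of_tendsto_limsup_measure_norm_gt <|
    tendsto_of_tendsto_of_tendsto_of_le_of_le tendsto_const_nhds
      (hμ.comp (tendsto_atTop_add_const_right _ (-1) tendsto_id)) (fun _ => zero_le) fun r => ?_
  calc limsup (fun n => μs n {x | r < ‖x‖}) atTop
      ≤ limsup (fun n => μs n {x | r ≤ ‖x‖}) atTop :=
        limsup_le_limsup (Eventually.of_forall fun n => measure_mono fun x (hx : r < ‖x‖) => hx.le)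
    _ ≤ μ {x | r ≤ ‖x‖} :=
        FiniteMeasure.limsup_measure_closed_le_of_tendsto hconv
          (isClosed_le continuous_const continuous_norm)
    _ ≤ μ {x | r + -1 < ‖x‖} :=
        measure_mono fun x (hx : r ≤ ‖x‖) => show r + -1 < ‖x‖ by linarith

end Tightness

lemma exists_forall_norm_gt_enorm_le {E F : Type*} [NormedAddCommGroup E] [NormedAddCommGroup F]
    {f : E → F} (hf : Tendsto f (cocompact E) (nhds 0)) {ε : ℝ≥0∞} (hε : 0 < ε) :
    ∃ M : ℝ, ∀ z, M < ‖z‖ → ‖f z‖ₑ ≤ ε := by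
  have h := ENNReal.tendsto_nhds_zero.1
    (tendsto_zero_iff_enorm_tendsto_zero.1 (hf.mono_left Metric.cobounded_le_cocompact)) ε hε
  rw [← comap_norm_atTop, eventually_comap, eventually_atTop] at h
  obtain ⟨M, hM⟩ := h
  exact ⟨M, fun z hz => hM _ hz.le z rfl⟩

lemma norm_sub_le_norm_sub_add_of_norm_add_le {E : Type*} [SeminormedAddCommGroup E]
    {x y a b : E} {r s : ℝ} (hx : ‖x + a‖ ≤ r) (hy : ‖y + b‖ ≤ s) :
    ‖a - b‖ ≤ ‖x - y‖ + r + s := by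
  have : a - b = (x + a) - (y + b) - (x - y) := by abel
  rw [this]
  linarith [norm_sub_le ((x + a) - (y + b)) (x - y), norm_sub_le (x + a) (y + b)]

section DoubleIntegral

variable {X Y G : Type*} [MeasurableSpace X] [MeasurableSpace Y]
  [NormedAddCommGroup G] [NormedSpace ℝ G]

lemma lintegral_indicator_const_add_const_le {ν : Measure Y} (hν : ν Set.univ ≤ 1)
    {T : Set Y} (hT : MeasurableSet T) {δ : ℝ≥0∞} (hνT : ν T ≤ δ) (c e : ℝ≥0∞) :
    ∫⁻ y, T.indicator (fun _ => c) y + e ∂ν ≤ c * δ + e := by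
  rw [lintegral_add_right _ measurable_const, lintegral_indicator_const hT, lintegral_const]
  gcongr
  exact mul_le_of_le_one_right' hν

lemma enorm_integral_integral_le {μ : Measure X} {ν : Measure Y}
    (hμ : μ Set.univ ≤ 1) (hν : ν Set.univ ≤ 1) {S : Set X} {T : Set Y}
    (hS : MeasurableSet S) (hT : MeasurableSet T) {f : X → Y → G} {C ε : ℝ≥0∞}
    (hC : ∀ x y, ‖f x y‖ₑ ≤ C) (hf : ∀ x ∉ S, ∀ y ∉ T, ‖f x y‖ₑ ≤ ε)
    (hμS : μ S ≤ ε) (hνT : ν T ≤ ε) :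
    ‖∫ x, ∫ y, f x y ∂ν ∂μ‖ₑ ≤ (2 * C + 1) * ε := by
  have inner (x : X) : ‖∫ y, f x y ∂ν‖ₑ ≤ S.indicator (fun _ => C) x + (C * ε + ε) := by
    refine (enorm_integral_le_lintegral_enorm _).trans ?_
    by_cases hx : x ∈ S
    · calc ∫⁻ y, ‖f x y‖ₑ ∂ν ≤ ∫⁻ _, C ∂ν := lintegral_mono (hC x)
        _ = C * ν Set.univ := lintegral_const C
        _ ≤ S.indicator (fun _ => C) x + (C * ε + ε) := by
          rw [Set.indicator_of_mem hx]
          exact (mul_le_of_le_one_right' hν).trans le_self_add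
    · calc ∫⁻ y, ‖f x y‖ₑ ∂ν ≤ ∫⁻ y, T.indicator (fun _ => C) y + ε ∂ν := by
            refine lintegral_mono fun y => ?_
            by_cases hy : y ∈ T
            · simpa [Set.indicator_of_mem hy] using le_add_right (hC x y)
            · simpa [Set.indicator_of_notMem hy] using hf x hx y hy
        _ ≤ C * ε + ε := lintegral_indicator_const_add_const_le hν hT hνT C ε
        _ = S.indicator (fun _ => C) x + (C * ε + ε) := by
          rw [Set.indicator_of_notMem hx, zero_add]
  calc ‖∫ x, ∫ y, f x y ∂ν ∂μ‖ₑ ≤ ∫⁻ x, ‖∫ y, f x y ∂ν‖ₑ ∂μ := enorm_integral_le_lintegral_enorm _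
    _ ≤ ∫⁻ x, S.indicator (fun _ => C) x + (C * ε + ε) ∂μ := lintegral_mono inner
    _ ≤ C * ε + (C * ε + ε) := lintegral_indicator_const_add_const_le hμ hS hμS C _
    _ = (2 * C + 1) * ε := by ring

end DoubleIntegral

/-- If `α_n ⋆ δ_{a_n} ⇒ α`, `β_n ⋆ δ_{b_n} ⇒ β` weakly and `|a_n − b_n| → ∞`, then
`∬ V(x−y) α_n(dx) β_n(dy) → 0` for every continuous `V` vanishing at infinity. -/
theorem mutually_separated_shifts_integral_tendsto_zero (d : ℕ)
    (α β : ℕ → Measure (EuclideanSpace ℝ (Fin d)))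
    (a b : ℕ → EuclideanSpace ℝ (Fin d))
    (hα1 : ∀ n, α n Set.univ ≤ 1) (hβ1 : ∀ n, β n Set.univ ≤ 1)
    (αlim βlim : Measure (EuclideanSpace ℝ (Fin d)))
    (hαlim : αlim Set.univ ≤ 1) (hβlim : βlim Set.univ ≤ 1)
    (hαconv : ∀ g : BoundedContinuousFunction (EuclideanSpace ℝ (Fin d)) ℝ,
      Tendsto (fun n => ∫ x, g x ∂((α n).map (· + a n))) atTop
        (nhds (∫ x, g x ∂αlim)))
    (hβconv : ∀ g : BoundedContinuousFunction (EuclideanSpace ℝ (Fin d)) ℝ,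
      Tendsto (fun n => ∫ x, g x ∂((β n).map (· + b n))) atTop
        (nhds (∫ x, g x ∂βlim)))
    (hsep : Tendsto (fun n => ‖a n - b n‖) atTop atTop)
    (V : EuclideanSpace ℝ (Fin d) → ℝ)
    (hVc : Continuous V)
    (hV0 : Tendsto V (cocompact (EuclideanSpace ℝ (Fin d))) (nhds 0)) :
    Tendsto (fun n => ∫ x, ∫ y, V (x - y) ∂(β n) ∂(α n)) atTop (nhds 0) := by
  have : ∀ n, IsFiniteMeasure (α n) := fun n => ⟨(hα1 n).trans_lt ENNReal.one_lt_top⟩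
  have : ∀ n, IsFiniteMeasure (β n) := fun n => ⟨(hβ1 n).trans_lt ENNReal.one_lt_top⟩
  have : IsFiniteMeasure αlim := ⟨hαlim.trans_lt ENNReal.one_lt_top⟩
  have : IsFiniteMeasure βlim := ⟨hβlim.trans_lt ENNReal.one_lt_top⟩
  let V₀ : C₀(EuclideanSpace ℝ (Fin d), ℝ) := ⟨⟨V, hVc⟩, hV0⟩
  set C := ‖V₀.toBCF‖ₑ
  have hVC (x y : EuclideanSpace ℝ (Fin d)) : ‖V (x - y)‖ₑ ≤ C :=
    enorm_le_iff_norm_le.2 (V₀.toBCF.norm_coe_le_norm (x - y))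
  rw [tendsto_zero_iff_enorm_tendsto_zero, ENNReal.tendsto_nhds_zero]
  intro η hη
  have hδ : 0 < η / (2 * C + 1) := ENNReal.div_pos hη.ne' (by finiteness)
  obtain ⟨rα, hrα⟩ := IsTightMeasureSet.exists_forall_measure_norm_gt_le
    (isTightMeasureSet_range_of_forall_integral_tendsto hαconv) hδ
  obtain ⟨rβ, hrβ⟩ := IsTightMeasureSet.exists_forall_measure_norm_gt_le
    (isTightMeasureSet_range_of_forall_integral_tendsto hβconv) hδ
  obtain ⟨M, hM⟩ := exists_forall_norm_gt_enorm_le hV0 hδ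
  filter_upwards [hsep.eventually_gt_atTop (M + rα + rβ)] with n hn
  have hmeas (r : ℝ) : MeasurableSet {x : EuclideanSpace ℝ (Fin d) | r < ‖x‖} :=
    measurableSet_lt measurable_const measurable_norm
  refine (enorm_integral_integral_le (hα1 n) (hβ1 n)
    ((hmeas rα).preimage (measurable_add_const (a n)))
    ((hmeas rβ).preimage (measurable_add_const (b n))) hVC
    (fun x hx y hy => hM _ ?_) ?_ ?_).trans ENNReal.mul_div_le
  · simp only [Set.mem_preimage, Set.mem_ofPred_eq, not_lt] at hx hy
    linarith [norm_sub_le_norm_sub_add_of_norm_add_le hx hy]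
  · rw [← Measure.map_apply (measurable_add_const _) (hmeas rα)]
    exact hrα _ (Set.mem_range_self n)
  · rw [← Measure.map_apply (measurable_add_const _) (hmeas rβ)]
    exact hrβ _ (Set.mem_range_self n)
end

section
/- Let α_n, β_n be sub-probability measures on ℝᵈ and c_n ∈ ℝᵈ a sequence of shifts such that α_n ⋆ δ_{c_n} ⇒ α and β_n ⋆ δ_{c_n} ⇒ β weakly. Then for every continuous V : ℝᵈ → ℝ vanishing at infinity, ∬ V(x − y) α_n(dx) β_n(dy) → ∬ V(x − y) α(dx) β(dy). -/
/-!
Translating both measures by the same vector leaves `∬ V(x − y) μ(dx) ν(dy)` unchanged, so the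
shifts may be dropped and the claim becomes the weak convergence of `αₙ ⊗ βₙ` tested against the
bounded continuous function `(x, y) ↦ V(x − y)`. Weak convergence of products of finite measures
reduces to that of probability measures by normalizing: the masses multiply.
-/

open MeasureTheory Filter Topology
open scoped NNReal BoundedContinuousFunction

namespace MeasureTheory.FiniteMeasure

variable {α β : Type*} [MeasurableSpace α] [MeasurableSpace β]

lemma smul_prod_smul (a b : ℝ≥0) (μ : FiniteMeasure α) (ν : FiniteMeasure β) :
    (a • μ).prod (b • ν) = (a * b) • μ.prod ν := by
  apply toMeasure_injective
  simp [Measure.prod_smul_left, Measure.prod_smul_right, smul_smul, mul_comm]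

lemma prod_eq_mass_mul_mass_smul_normalize_prod [Nonempty α] [Nonempty β]
    (μ : FiniteMeasure α) (ν : FiniteMeasure β) :
    μ.prod ν = (μ.mass * ν.mass) • (μ.normalize.prod ν.normalize).toFiniteMeasure := by
  conv_lhs => rw [μ.self_eq_mass_smul_normalize, ν.self_eq_mass_smul_normalize]
  rw [smul_prod_smul]
  rfl

lemma nonempty_of_ne_zero {μ : FiniteMeasure α} (hμ : μ ≠ 0) : Nonempty α := by
  by_contra h
  rw [not_nonempty_iff] at h
  exact hμ (toMeasure_injective (Measure.eq_zero_of_isEmpty _))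

variable [TopologicalSpace α] [TopologicalSpace β] [SecondCountableTopology α]
  [SecondCountableTopology β] [TopologicalSpace.PseudoMetrizableSpace α]
  [TopologicalSpace.PseudoMetrizableSpace β] [OpensMeasurableSpace α] [OpensMeasurableSpace β]

theorem tendsto_prod {ι : Type*} {l : Filter ι} {μs : ι → FiniteMeasure α}
    {νs : ι → FiniteMeasure β} {μ : FiniteMeasure α} {ν : FiniteMeasure β}
    (hμ : Tendsto μs l (𝓝 μ)) (hν : Tendsto νs l (𝓝 ν)) :
    Tendsto (fun i ↦ (μs i).prod (νs i)) l (𝓝 (μ.prod ν)) := by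
  by_cases h0 : μ = 0 ∨ ν = 0
  · have hmass := hμ.mass.mul hν.mass
    rcases h0 with rfl | rfl <;>
    · simp only [zero_mass, zero_mul, mul_zero, ← mass_prod] at hmass
      simpa using tendsto_zero_of_tendsto_zero_mass hmass
  rw [not_or] at h0
  have := nonempty_of_ne_zero h0.1
  have := nonempty_of_ne_zero h0.2
  simp_rw [prod_eq_mass_mul_mass_smul_normalize_prod]
  refine (hμ.mass.mul hν.mass).smul ?_
  exact ProbabilityMeasure.toFiniteMeasure_continuous.continuousAt.tendsto.comp <|
    ProbabilityMeasure.continuous_prod.continuousAt.tendsto.comp <|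
      (tendsto_normalize_of_tendsto hμ h0.1).prodMk_nhds (tendsto_normalize_of_tendsto hν h0.2)

theorem tendsto_integral_integral {ι : Type*} {l : Filter ι} {μs : ι → FiniteMeasure α}
    {νs : ι → FiniteMeasure β} {μ : FiniteMeasure α} {ν : FiniteMeasure β}
    (hμ : Tendsto μs l (𝓝 μ)) (hν : Tendsto νs l (𝓝 ν)) (f : α × β →ᵇ ℝ) :
    Tendsto (fun i ↦ ∫ x, ∫ y, f (x, y) ∂(νs i : Measure β) ∂(μs i : Measure α)) l
      (𝓝 (∫ x, ∫ y, f (x, y) ∂(ν : Measure β) ∂(μ : Measure α))) := by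
  simp_rw [← integral_prod _ (f.integrable _)]
  exact tendsto_iff_forall_integral_tendsto.mp (tendsto_prod hμ hν) f

end MeasureTheory.FiniteMeasure

lemma integral_integral_sub_map_add_right {G F : Type*} [AddGroup G] [MeasurableSpace G]
    [MeasurableAdd G] [NormedAddCommGroup F] [NormedSpace ℝ F] (f : G → F) (μ ν : Measure G)
    (c : G) :
    ∫ x, ∫ y, f (x - y) ∂(ν.map (· + c)) ∂(μ.map (· + c)) = ∫ x, ∫ y, f (x - y) ∂ν ∂μ := by
  simp only [(measurableEmbedding_addRight c).integral_map, add_sub_add_right_eq_sub]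

/-- If `α_n ⋆ δ_{c_n} ⇒ α` and `β_n ⋆ δ_{c_n} ⇒ β` weakly (common shifts), then
`∬ V(x−y) α_n(dx) β_n(dy) → ∬ V(x−y) α(dx) β(dy)` for `V` continuous vanishing at
infinity. -/
theorem common_shift_integral_convergence (d : ℕ)
    (α β : ℕ → Measure (EuclideanSpace ℝ (Fin d)))
    (c : ℕ → EuclideanSpace ℝ (Fin d))
    (hα1 : ∀ n, α n Set.univ ≤ 1) (hβ1 : ∀ n, β n Set.univ ≤ 1)
    (αlim βlim : Measure (EuclideanSpace ℝ (Fin d)))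
    (hαlim : αlim Set.univ ≤ 1) (hβlim : βlim Set.univ ≤ 1)
    (hαconv : ∀ g : BoundedContinuousFunction (EuclideanSpace ℝ (Fin d)) ℝ,
      Tendsto (fun n => ∫ x, g x ∂((α n).map (· + c n))) atTop
        (nhds (∫ x, g x ∂αlim)))
    (hβconv : ∀ g : BoundedContinuousFunction (EuclideanSpace ℝ (Fin d)) ℝ,
      Tendsto (fun n => ∫ x, g x ∂((β n).map (· + c n))) atTop
        (nhds (∫ x, g x ∂βlim)))
    (V : EuclideanSpace ℝ (Fin d) → ℝ)
    (hVc : Continuous V)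
    (hV0 : Tendsto V (cocompact (EuclideanSpace ℝ (Fin d))) (nhds 0)) :
    Tendsto (fun n => ∫ x, ∫ y, V (x - y) ∂(β n) ∂(α n)) atTop
      (nhds (∫ x, ∫ y, V (x - y) ∂βlim ∂αlim)) := by
  have finite {μ : Measure (EuclideanSpace ℝ (Fin d))} (hμ : μ Set.univ ≤ 1) :
      IsFiniteMeasure μ :=
    ⟨hμ.trans_lt ENNReal.one_lt_top⟩
  let shift (μ : ℕ → Measure (EuclideanSpace ℝ (Fin d))) (hμ : ∀ n, μ n Set.univ ≤ 1) (n : ℕ) :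
      FiniteMeasure (EuclideanSpace ℝ (Fin d)) :=
    ⟨(μ n).map (· + c n), have := finite (hμ n); inferInstance⟩
  have hα : Tendsto (shift α hα1) atTop (𝓝 ⟨αlim, finite hαlim⟩) :=
    FiniteMeasure.tendsto_iff_forall_integral_tendsto.mpr hαconv
  have hβ : Tendsto (shift β hβ1) atTop (𝓝 ⟨βlim, finite hβlim⟩) :=
    FiniteMeasure.tendsto_iff_forall_integral_tendsto.mpr hβconv
  let W : EuclideanSpace ℝ (Fin d) × EuclideanSpace ℝ (Fin d) →ᵇ ℝ :=
    (ZeroAtInftyContinuousMap.toBCF ⟨⟨V, hVc⟩, hV0⟩).compContinuous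
      ⟨fun p ↦ p.1 - p.2, continuous_sub⟩
  refine (FiniteMeasure.tendsto_integral_integral hα hβ W).congr fun n ↦ ?_
  exact integral_integral_sub_map_add_right V (α n) (β n) (c n)
end
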